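/- arXiv:1909.09449 — 6 statements merged into one kernel-verified Lean document; each statement's English description precedes it below -/
import Mathlib

section
/- Let Φ(x) = (1/√d) · x / (d + 1 + Σᵢ xᵢ). For each coordinate k and each x ∈ V = (-1,∞)^d: if x_k < 0 then -1/√d < Φ(x)_k < 0, and if x_k ≥ 0 then 0 ≤ Φ(x)_k ≤ x_k/(x_k + 2) < 1/√d. In particular |Φ(x)_k| < 1/√d for all k. -/
open scoped BigOperators

/-- coordinatewise bounds for `Φ(x)_k = x_k / (√d (d+1+∑ᵢ xᵢ))`
on `V = (-1,∞)^d`: if `x_k < 0` then `-1/√d < Φ(x)_k < 0`; if `x_k ≥ 0` then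
`0 ≤ Φ(x)_k ≤ (1/√d)·x_k/(x_k+2) < 1/√d`; in particular `|Φ(x)_k| < 1/√d`. -/
theorem stmt1 (d : ℕ) (hd : 1 ≤ d) (x : Fin d → ℝ) (hx : ∀ i, -1 < x i) (k : Fin d) :
    (x k < 0 →
      -1 / Real.sqrt d < x k / (Real.sqrt d * (d + 1 + ∑ i, x i)) ∧
      x k / (Real.sqrt d * (d + 1 + ∑ i, x i)) < 0) ∧
    (0 ≤ x k →
      0 ≤ x k / (Real.sqrt d * (d + 1 + ∑ i, x i)) ∧
      x k / (Real.sqrt d * (d + 1 + ∑ i, x i)) ≤ x k / ((x k + 2) * Real.sqrt d) ∧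
      x k / ((x k + 2) * Real.sqrt d) < 1 / Real.sqrt d) ∧
    |x k / (Real.sqrt d * (d + 1 + ∑ i, x i))| < 1 / Real.sqrt d := by
  have hd0 : (0:ℝ) < d := by exact_mod_cast hd
  have hr : 0 < Real.sqrt d := Real.sqrt_pos.2 hd0
  set r := Real.sqrt d with hrdef
  set S : ℝ := (d:ℝ) + 1 + ∑ i, x i with hSdef
  have hsum : -(d:ℝ) < ∑ i, x i := by
    have : ∑ _i : Fin d, (-1:ℝ) < ∑ i, x i := by
      apply Finset.sum_lt_sum_of_nonempty
      · exact Finset.univ_nonempty_iff.2 ⟨⟨0, hd⟩⟩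
      · intro i _; exact hx i
    simpa using this
  have hS1 : (1:ℝ) < S := by simp only [hSdef]; linarith
  have hS0 : 0 < S := by linarith
  have hxk : -1 < x k := hx k
  have hSk : x k + 2 ≤ S := by
    have hsplit : ∑ i, x i = x k + ∑ i ∈ Finset.univ.erase k, x i := by
      rw [Finset.add_sum_erase _ _ (Finset.mem_univ k)]
    have herase : -((d:ℝ) - 1) ≤ ∑ i ∈ Finset.univ.erase k, x i := by
      have : ∑ _i ∈ Finset.univ.erase k, (-1:ℝ) ≤ ∑ i ∈ Finset.univ.erase k, x i :=
        Finset.sum_le_sum (fun i _ => (hx i).le)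
      have hcard : (Finset.univ.erase k).card = d - 1 := by
        simp [Finset.card_erase_of_mem]
      rw [Finset.sum_const, hcard] at this
      have : -((d - 1 : ℕ) : ℝ) ≤ ∑ i ∈ Finset.univ.erase k, x i := by
        simpa using this
      have hcast : ((d - 1 : ℕ) : ℝ) = (d:ℝ) - 1 := by
        have := Nat.cast_sub hd (R := ℝ); simpa using this
      linarith [hcast ▸ this]
    simp only [hSdef, hsplit]; linarith
  have hrS : 0 < r * S := mul_pos hr hS0
  have hneg : x k < 0 →
      -1 / r < x k / (r * S) ∧ x k / (r * S) < 0 := by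
    intro hk
    constructor
    · rw [div_lt_div_iff₀ hr hrS]
      nlinarith [mul_pos hr (show 0 < x k + S by linarith)]
    · exact div_neg_of_neg_of_pos hk hrS
  have hpos : 0 ≤ x k →
      0 ≤ x k / (r * S) ∧ x k / (r * S) ≤ x k / ((x k + 2) * r) ∧
        x k / ((x k + 2) * r) < 1 / r := by
    intro hk
    have h2 : 0 < (x k + 2) * r := mul_pos (by linarith) hr
    refine ⟨div_nonneg hk hrS.le, ?_, ?_⟩
    · apply div_le_div_of_nonneg_left hk h2
      nlinarith
    · rw [div_lt_div_iff₀ h2 hr]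
      nlinarith
  refine ⟨hneg, hpos, ?_⟩
  rcases lt_or_ge (x k) 0 with hk | hk
  · obtain ⟨h1, h2⟩ := hneg hk
    rw [abs_lt]
    constructor
    · rw [neg_div] at h1; linarith
    · linarith [one_div_pos.2 hr]
  · obtain ⟨h1, h2, h3⟩ := hpos hk
    rw [abs_of_nonneg h1]
    linarith
end

section
/- Fix d ≥ 1 and r ∈ (0,1). If y ∈ ℝ^d satisfies (d·r + √d·(d+1))·‖y‖ < r, then √d·Σᵢ yᵢ < 1 and the point x = (√d(d+1)/(1 - √d·Σᵢ yᵢ))·y satisfies ‖x‖ < r. Consequently the open ball B(0, r/(d·r + √d(d+1))) is contained in the image of B(0,r) under Φ(x) = (1/√d)·x/(d+1+Σᵢ xᵢ). -/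
/-!
By Cauchy–Schwarz against the all-ones vector, `√d · ∑ᵢ yᵢ ≤ d‖y‖`, so the hypothesis
`(d r + √d (d+1))‖y‖ < r` gives both `√d · ∑ᵢ yᵢ < 1` and
`√d (d+1) ‖y‖ < r (1 - √d · ∑ᵢ yᵢ)`, which is `‖x‖ < r`. The point `x = c • y` is the
preimage of `y` under `Φ` because `c` solves `√d (d + 1 + c ∑ᵢ yᵢ) = c`.
-/

theorem EuclideanSpace.sum_le_sqrt_card_mul_norm {ι : Type*} [Fintype ι]
    (y : EuclideanSpace ℝ ι) : ∑ i, y i ≤ √(Fintype.card ι) * ‖y‖ := by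
  let ones : EuclideanSpace ℝ ι := WithLp.toLp 2 fun _ => 1
  have h_inner : inner ℝ ones y = ∑ i, y i := by simp [ones, PiLp.inner_apply]
  have h_norm : ‖ones‖ = √(Fintype.card ι) := by simp [ones, EuclideanSpace.norm_eq]
  simpa [h_inner, h_norm] using real_inner_le_norm ones y

section

variable {d : ℕ} {r : ℝ} {y : EuclideanSpace ℝ (Fin d)}

theorem sqrt_mul_sum_le_mul_norm (y : EuclideanSpace ℝ (Fin d)) :
    √d * ∑ i, y i ≤ d * ‖y‖ := by
  calc √d * ∑ i, y i ≤ √d * (√d * ‖y‖) := by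
        gcongr; simpa using EuclideanSpace.sum_le_sqrt_card_mul_norm y
    _ = d * ‖y‖ := by rw [← mul_assoc, Real.mul_self_sqrt d.cast_nonneg]

theorem sqrt_mul_sum_lt_one (hr : 0 < r) (hy : (d * r + √d * (d + 1)) * ‖y‖ < r) :
    √d * ∑ i, y i < 1 := by
  have h_le := sqrt_mul_sum_le_mul_norm y
  have : 0 ≤ √d * (d + 1) * ‖y‖ := by positivity
  have h_dr : r * (d * ‖y‖) < r * 1 := by linarith
  linarith [lt_of_mul_lt_mul_left h_dr hr.le]

theorem norm_smul_lt_of_mul_norm_lt (hr : 0 < r) (hy : (d * r + √d * (d + 1)) * ‖y‖ < r) :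
    ‖(√d * (d + 1) / (1 - √d * ∑ i, y i)) • y‖ < r := by
  have h_pos : 0 < 1 - √d * ∑ i, y i := sub_pos.mpr (sqrt_mul_sum_lt_one hr hy)
  have h_le := mul_le_mul_of_nonneg_left (sqrt_mul_sum_le_mul_norm y) hr.le
  rw [norm_smul, Real.norm_of_nonneg (by positivity), div_mul_eq_mul_div, div_lt_iff₀ h_pos]
  linarith

end

theorem inv_mul_add_mul_smul_smul {E : Type*} [AddCommGroup E] [Module ℝ E] {k a t : ℝ}
    (hk : k ≠ 0) (ha : a ≠ 0) (ht : k * t ≠ 1) (y : E) :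
    (k * (a + k * a / (1 - k * t) * t))⁻¹ • ((k * a / (1 - k * t)) • y) = y := by
  have h_sub : 1 - k * t ≠ 0 := sub_ne_zero.mpr ht.symm
  have h_fixed : k * (a + k * a / (1 - k * t) * t) = k * a / (1 - k * t) := by
    field_simp
    ring
  rw [h_fixed, inv_smul_smul₀ (div_ne_zero (mul_ne_zero hk ha) h_sub)]

/-- if `(d·r + √d(d+1))·‖y‖ < r` then `√d·∑ᵢ yᵢ < 1` and
`x = (√d(d+1)/(1 - √d·∑ᵢ yᵢ))·y` has `‖x‖ < r`; consequently
`B(0, r/(d·r + √d(d+1))) ⊆ Φ(B(0,r))` where `Φ(x) = (1/√d)·x/(d+1+∑ᵢ xᵢ)`. -/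
theorem stmt3 (d : ℕ) (hd : 1 ≤ d) (r : ℝ) (hr : r ∈ Set.Ioo (0 : ℝ) 1) :
    (∀ y : EuclideanSpace ℝ (Fin d),
      (d * r + Real.sqrt d * (d + 1)) * ‖y‖ < r →
        Real.sqrt d * ∑ i, y i < 1 ∧
        ‖(Real.sqrt d * (d + 1) / (1 - Real.sqrt d * ∑ i, y i)) • y‖ < r) ∧
    Metric.ball (0 : EuclideanSpace ℝ (Fin d)) (r / (d * r + Real.sqrt d * (d + 1))) ⊆
      (fun x : EuclideanSpace ℝ (Fin d) =>
        ((Real.sqrt d * (d + 1 + ∑ i, x i))⁻¹ : ℝ) • x) '' Metric.ball 0 r := by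
  have hr0 : 0 < r := hr.1
  refine ⟨fun y hy => ⟨sqrt_mul_sum_lt_one hr0 hy, norm_smul_lt_of_mul_norm_lt hr0 hy⟩,
    fun y hy => ?_⟩
  have hd0 : (0 : ℝ) < d := by exact_mod_cast hd
  rw [Metric.mem_ball, dist_zero_right, lt_div_iff₀ (by positivity), mul_comm] at hy
  refine ⟨_, mem_ball_zero_iff.mpr (norm_smul_lt_of_mul_norm_lt hr0 hy), ?_⟩
  simp only [PiLp.smul_apply, smul_eq_mul, ← Finset.mul_sum]
  exact inv_mul_add_mul_smul_smul (Real.sqrt_pos.mpr hd0).ne' (by positivity)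
    (sqrt_mul_sum_lt_one hr0 hy).ne y
end

section
/- If D ⊂ ℝ^d is a domain containing a whole affine line, then for any injective projective (linear-fractional) map defined on D, the image of D is unbounded; in particular no projective map sends D into the open unit ball while containing a nonempty open ball in its image. Hence the projective squeezing function of D is identically 0. -/
open scoped BigOperators

/-- A map `φ` is projective on `S ⊆ ℝ^d` if it is induced in affine coordinates by an
invertible linear map of `ℝ^{d+1}` (acting on homogeneous coordinates `(1 : x)`),
whose "denominator" does not vanish on `S`. -/
def IsProjectiveMap {d : ℕ} (S : Set (EuclideanSpace ℝ (Fin d)))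
    (φ : EuclideanSpace ℝ (Fin d) → EuclideanSpace ℝ (Fin d)) : Prop :=
  ∃ A : Matrix (Fin (d + 1)) (Fin (d + 1)) ℝ, IsUnit A.det ∧
    ∀ x ∈ S,
      A.mulVec (Fin.cons 1 (fun i => x i)) 0 ≠ 0 ∧
      ∀ i : Fin d, φ x i =
        A.mulVec (Fin.cons 1 (fun j => x j)) i.succ /
        A.mulVec (Fin.cons 1 (fun j => x j)) 0

/-- The projective squeezing function. -/
noncomputable def projSqueezing {d : ℕ} (D : Set (EuclideanSpace ℝ (Fin d)))
    (z : EuclideanSpace ℝ (Fin d)) : ℝ :=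
  sSup (insert 0 {r : ℝ | 0 < r ∧ ∃ φ, IsProjectiveMap D φ ∧ φ z = 0 ∧
    φ '' D ⊆ Metric.ball 0 1 ∧ Metric.ball 0 r ⊆ φ '' D})

/-!
Write `A (1 : a + t v) = u + t w` along the line. The denominator `u₀ + t w₀` never vanishes,
so `w₀ = 0`; since `A` is invertible and `v ≠ 0`, some numerator slope `w_{i+1}` is nonzero.
The `i`-th coordinate of `φ` on the line is then the nonconstant affine function
`t ↦ (u_{i+1} + t w_{i+1}) / u₀`, which takes every real value, so `φ '' D` is unbounded,
and no projective image of `D` fits into the unit ball.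
-/

open Matrix

lemma exists_add_mul_eq {K : Type*} [Field K] (p : K) {q : K} (hq : q ≠ 0) (y : K) :
    ∃ t, p + t * q = y :=
  ⟨(y - p) / q, by field_simp; ring⟩

section

variable {d : ℕ}

lemma mulVec_cons_one_add_smul (A : Matrix (Fin (d + 1)) (Fin (d + 1)) ℝ)
    (a v : EuclideanSpace ℝ (Fin d)) (t : ℝ) :
    A *ᵥ (Fin.cons 1 (fun j => (a + t • v) j)) =
      A *ᵥ (Fin.cons 1 (fun j => a j)) + t • A *ᵥ (Fin.cons 0 (fun j => v j)) := by
  have hsplit : (Fin.cons 1 (fun j => (a + t • v) j) : Fin (d + 1) → ℝ) =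
      Fin.cons 1 (fun j => a j) + t • Fin.cons 0 (fun j => v j) := by
    funext k
    refine Fin.cases ?_ (fun j => ?_) k <;> simp
  rw [hsplit, mulVec_add, mulVec_smul]

lemma IsProjectiveMap.exists_surjOn_coord_of_line {D : Set (EuclideanSpace ℝ (Fin d))}
    {φ : EuclideanSpace ℝ (Fin d) → EuclideanSpace ℝ (Fin d)} (hφ : IsProjectiveMap D φ)
    {a v : EuclideanSpace ℝ (Fin d)} (hv : v ≠ 0) (hline : ∀ t : ℝ, a + t • v ∈ D) :
    ∃ i : Fin d, ∀ y : ℝ, ∃ x ∈ D, φ x i = y := by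
  obtain ⟨A, hdet, hA⟩ := hφ
  have hA_line (t : ℝ) := hA _ (hline t)
  simp only [mulVec_cons_one_add_smul, Pi.add_apply, Pi.smul_apply, smul_eq_mul] at hA_line
  set u := A *ᵥ (Fin.cons 1 (fun j => a j) : Fin (d + 1) → ℝ)
  set w := A *ᵥ (Fin.cons 0 (fun j => v j) : Fin (d + 1) → ℝ)
  have hw₀ : w 0 = 0 := by
    by_contra hw₀
    obtain ⟨t, ht⟩ := exists_add_mul_eq (u 0) hw₀ 0
    exact (hA_line t).1 ht
  have hu₀ : u 0 ≠ 0 := by simpa using (hA_line 0).1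
  have hw : w ≠ 0 := by
    intro hw
    refine hv (PiLp.ext fun j => ?_)
    simpa using congrFun (eq_zero_of_mulVec_eq_zero hdet.ne_zero hw) j.succ
  obtain ⟨i, hi⟩ : ∃ i : Fin d, w i.succ ≠ 0 := by
    obtain ⟨k, hk⟩ := Function.ne_iff.mp hw
    induction k using Fin.cases with
    | zero => exact absurd hw₀ hk
    | succ i => exact ⟨i, hk⟩
  refine ⟨i, fun y => ?_⟩
  obtain ⟨t, ht⟩ := exists_add_mul_eq (u i.succ) hi (y * u 0)
  exact ⟨a + t • v, hline t, by rw [(hA_line t).2 i, hw₀, ht, mul_zero, add_zero, mul_div_cancel_right₀ y hu₀]⟩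

lemma not_isBounded_of_surjOn_coord {S : Set (EuclideanSpace ℝ (Fin d))} {i : Fin d}
    (hS : ∀ y : ℝ, ∃ x ∈ S, x i = y) : ¬ Bornology.IsBounded S := by
  rintro hb
  obtain ⟨C, hC⟩ := isBounded_iff_forall_norm_le.mp hb
  obtain ⟨x, hx, hxi⟩ := hS (C + 1)
  have := (PiLp.norm_apply_le x i).trans (hC x hx)
  rw [hxi, Real.norm_eq_abs] at this
  linarith [le_abs_self (C + 1)]

lemma IsProjectiveMap.not_isBounded_image_of_line {D : Set (EuclideanSpace ℝ (Fin d))}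
    {φ : EuclideanSpace ℝ (Fin d) → EuclideanSpace ℝ (Fin d)} (hφ : IsProjectiveMap D φ)
    {a v : EuclideanSpace ℝ (Fin d)} (hv : v ≠ 0) (hline : ∀ t : ℝ, a + t • v ∈ D) :
    ¬ Bornology.IsBounded (φ '' D) := by
  obtain ⟨i, hi⟩ := hφ.exists_surjOn_coord_of_line hv hline
  refine not_isBounded_of_surjOn_coord (i := i) fun y => ?_
  obtain ⟨x, hx, rfl⟩ := hi y
  exact ⟨φ x, Set.mem_image_of_mem φ hx, rfl⟩

lemma projSqueezing_eq_zero_of_line {D : Set (EuclideanSpace ℝ (Fin d))}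
    {a v : EuclideanSpace ℝ (Fin d)} (hv : v ≠ 0) (hline : ∀ t : ℝ, a + t • v ∈ D)
    (z : EuclideanSpace ℝ (Fin d)) : projSqueezing D z = 0 := by
  have hempty : {r : ℝ | 0 < r ∧ ∃ φ, IsProjectiveMap D φ ∧ φ z = 0 ∧
      φ '' D ⊆ Metric.ball 0 1 ∧ Metric.ball 0 r ⊆ φ '' D} = ∅ := by
    refine Set.eq_empty_of_forall_notMem fun r ⟨_, φ, hφ, _, hball, _⟩ => ?_
    exact hφ.not_isBounded_image_of_line hv hline (Metric.isBounded_ball.subset hball)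
  rw [projSqueezing, hempty, insert_empty_eq, csSup_singleton]

end

theorem stmt4_general (d : ℕ) (D : Set (EuclideanSpace ℝ (Fin d)))
    (hline : ∃ a v : EuclideanSpace ℝ (Fin d), v ≠ 0 ∧ ∀ t : ℝ, a + t • v ∈ D) :
    (∀ φ, IsProjectiveMap D φ → Set.InjOn φ D → ¬ Bornology.IsBounded (φ '' D)) ∧
    ∀ z ∈ D, projSqueezing D z = 0 := by
  obtain ⟨a, v, hv, hline⟩ := hline
  exact ⟨fun φ hφ _ => hφ.not_isBounded_image_of_line hv hline,
    fun z _ => projSqueezing_eq_zero_of_line hv hline z⟩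

/-- if a domain `D ⊆ ℝ^d` contains an affine line, then any projective map
injective on `D` has unbounded image of `D`; in particular the projective squeezing
function of `D` is identically `0`. -/
theorem stmt4 (d : ℕ) (hd : 1 ≤ d) (D : Set (EuclideanSpace ℝ (Fin d)))
    (hD : IsOpen D) (hne : D.Nonempty) (hconn : IsConnected D)
    (hline : ∃ a v : EuclideanSpace ℝ (Fin d), v ≠ 0 ∧ ∀ t : ℝ, a + t • v ∈ D) :
    (∀ φ, IsProjectiveMap D φ → Set.InjOn φ D → ¬ Bornology.IsBounded (φ '' D)) ∧
    ∀ z ∈ D, projSqueezing D z = 0 :=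
  stmt4_general d D hline
end

section
/- Let D ⊂ ℝ^d be a domain, p ∈ ∂D, p_k ∈ D with p fixed and X_k = (p − p_k)/‖p − p_k‖. If every projective map f: (−1,1) → D with f lying in the line through p_k in direction X_k has image contained in the ray {p − t·X_k : t > 0}, then the projective Kobayashi–Royden metric satisfies F_D(p_k; X_k) ≥ 1/‖p − p_k‖. -/
/-!
Pairing with the unit vector `X` turns a projective curve `f` with `f 0 = q`, `V • f'(0) = X`
into the real linear-fractional function `g t = ⟪X, p - f t⟫`. The ray hypothesis makes `g`
positive on `(-1,1)`, while `g 0 = ‖p - q‖` and `V g'(0) = -1`. A positive linear-fractional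
function on `(-1,1)` satisfies `|g'(0)| ≤ 2 g(0)`, because its numerator and denominator keep a
fixed sign up to the endpoints `±1`. Hence `2|V| ≥ 1/‖p - q‖`.
-/

/-- A map `f : ℝ → ℝ^d` is projective on the interval `(-1,1)` if it has the
linear-fractional form `t ↦ (c + u·t)⁻¹ • (a + t • b)` with nonvanishing
denominator on `(-1,1)`. -/
def IsProjectiveCurve {d : ℕ} (f : ℝ → EuclideanSpace ℝ (Fin d)) : Prop :=
  ∃ (a b : EuclideanSpace ℝ (Fin d)) (c u : ℝ), ∀ t ∈ Set.Ioo (-1 : ℝ) 1,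
    c + u * t ≠ 0 ∧ f t = (c + u * t)⁻¹ • (a + t • b)

/-- The projective Kobayashi–Royden metric
`F_D(p;X) = inf {2|V| : f projective, f : (-1,1) → D, f(0) = p, Df(0)(V) = X}`. -/
noncomputable def projKoba {d : ℕ} (D : Set (EuclideanSpace ℝ (Fin d)))
    (p X : EuclideanSpace ℝ (Fin d)) : ℝ :=
  sInf {t : ℝ | ∃ (f : ℝ → EuclideanSpace ℝ (Fin d)) (V : ℝ),
    IsProjectiveCurve f ∧ Set.MapsTo f (Set.Ioo (-1 : ℝ) 1) D ∧
    f 0 = p ∧ V • deriv f 0 = X ∧ t = 2 * |V|}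

open Set RealInnerProductSpace

def IsProjectiveFun (g : ℝ → ℝ) : Prop :=
  ∃ A B c u : ℝ, ∀ t ∈ Ioo (-1 : ℝ) 1, c + u * t ≠ 0 ∧ g t = (c + u * t)⁻¹ * (A + B * t)

lemma nonneg_on_Icc_of_pos_on_Ioo {φ : ℝ → ℝ} {a b : ℝ} (hab : a ≠ b) (hφ : Continuous φ)
    (hpos : ∀ t ∈ Ioo a b, 0 < φ t) : ∀ t ∈ Icc a b, 0 ≤ φ t := by
  rw [← closure_Ioo hab]
  exact closure_minimal (fun t ht => (hpos t ht).le) (isClosed_le continuous_const hφ)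

lemma abs_le_abs_of_add_mul_ne_zero {c u : ℝ} (h : ∀ t ∈ Ioo (-1 : ℝ) 1, c + u * t ≠ 0) :
    |u| ≤ |c| := by
  by_contra! hcu
  have hu : u ≠ 0 := by rintro rfl; simp at hcu; linarith [abs_nonneg c]
  refine h (-c / u) ?_ (by field_simp; ring)
  rw [mem_Ioo, ← abs_lt, abs_div, abs_neg, div_lt_one (abs_pos.mpr hu)]
  exact hcu

lemma mul_add_mul_pos_of_add_mul_ne_zero {c u : ℝ} (h : ∀ t ∈ Ioo (-1 : ℝ) 1, c + u * t ≠ 0)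
    {t : ℝ} (ht : t ∈ Ioo (-1 : ℝ) 1) : 0 < c * (c + u * t) := by
  have hc : c ≠ 0 := by simpa using h 0 (by norm_num)
  have hu := abs_le_abs_of_add_mul_ne_zero h
  have ht1 : |t| < 1 := abs_lt.mpr ht
  have : |c * (u * t)| < c * c := by
    rw [abs_mul, abs_mul, ← abs_mul_abs_self c]
    calc |c| * (|u| * |t|) ≤ |c| * (|c| * |t|) := by gcongr
      _ < |c| * (|c| * 1) := by gcongr
      _ = |c| * |c| := by ring
  nlinarith [neg_abs_le (c * (u * t))]

lemma abs_mul_sub_mul_le_two_mul_of_pos {A B c u : ℝ}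
    (h : ∀ t ∈ Ioo (-1 : ℝ) 1, c + u * t ≠ 0 ∧ 0 < (c + u * t)⁻¹ * (A + B * t)) :
    |B * c - A * u| ≤ 2 * (A * c) := by
  have hden : ∀ t ∈ Ioo (-1 : ℝ) 1, c + u * t ≠ 0 := fun t ht => (h t ht).1
  -- The numerator has the sign of the denominator, i.e. of `c`; by continuity `c (A ± B) ≥ 0`.
  have hnum : ∀ t ∈ Ioo (-1 : ℝ) 1, 0 < c * A + c * B * t := by
    intro t ht
    have := mul_pos (mul_add_mul_pos_of_add_mul_ne_zero hden ht) (h t ht).2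
    rwa [mul_assoc, mul_inv_cancel_left₀ (hden t ht), mul_add, ← mul_assoc] at this
  have hends := nonneg_on_Icc_of_pos_on_Ioo (by norm_num) (by fun_prop) hnum
  have h1 := hends 1 (by norm_num)
  have h2 := hends (-1) (by norm_num)
  have hcA : |c * B| ≤ c * A := abs_le.mpr ⟨by linarith, by linarith⟩
  have hu := abs_le_abs_of_add_mul_ne_zero hden
  have hA : 0 < c * A := by simpa using hnum 0 (by norm_num)
  calc |B * c - A * u| ≤ |B * c| + |A * u| := abs_sub _ _
    _ ≤ |c * B| + |A| * |c| := by rw [mul_comm B, abs_mul A]; gcongr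
    _ ≤ c * A + c * A := by rw [← abs_mul, mul_comm A, abs_of_pos hA]; linarith
    _ = 2 * (A * c) := by ring

lemma hasDerivAt_inv_mul_zero {A B c u : ℝ} (hc : c ≠ 0) :
    HasDerivAt (fun t => (c + u * t)⁻¹ * (A + B * t)) ((B * c - A * u) / c ^ 2) 0 := by
  have hden : HasDerivAt (fun t : ℝ => c + u * t) u 0 := by
    simpa using ((hasDerivAt_id (0 : ℝ)).const_mul u).const_add c
  have hnum : HasDerivAt (fun t : ℝ => A + B * t) B 0 := by
    simpa using ((hasDerivAt_id (0 : ℝ)).const_mul B).const_add A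
  refine ((hden.inv (by simpa using hc)).mul hnum).congr_deriv ?_
  simp only [Pi.inv_apply, mul_zero, add_zero]
  field_simp
  ring

theorem IsProjectiveFun.abs_deriv_le {g : ℝ → ℝ} (hg : IsProjectiveFun g)
    (hpos : ∀ t ∈ Ioo (-1 : ℝ) 1, 0 < g t) : |deriv g 0| ≤ 2 * g 0 := by
  obtain ⟨A, B, c, u, h⟩ := hg
  obtain ⟨hc, hg0⟩ : c ≠ 0 ∧ g 0 = c⁻¹ * A := by simpa using h 0 (by norm_num)
  have hg : g =ᶠ[nhds 0] fun t => (c + u * t)⁻¹ * (A + B * t) :=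
    Filter.eventuallyEq_of_mem (Ioo_mem_nhds (by norm_num) (by norm_num)) fun t ht => (h t ht).2
  have hbound :=
    abs_mul_sub_mul_le_two_mul_of_pos fun t ht => ⟨(h t ht).1, (h t ht).2 ▸ hpos t ht⟩
  have hc2 : 0 < c ^ 2 := by positivity
  rw [hg.deriv_eq, (hasDerivAt_inv_mul_zero hc).deriv, hg0, abs_div, abs_of_pos hc2,
    div_le_iff₀ hc2]
  calc |B * c - A * u| ≤ 2 * (A * c) := hbound
    _ = 2 * (c⁻¹ * A) * c ^ 2 := by field_simp

namespace IsProjectiveCurve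

variable {d : ℕ} {f : ℝ → EuclideanSpace ℝ (Fin d)}

lemma differentiableAt_zero (hf : IsProjectiveCurve f) : DifferentiableAt ℝ f 0 := by
  obtain ⟨a, b, c, u, h⟩ := hf
  have hf : f =ᶠ[nhds 0] fun t => (c + u * t)⁻¹ • (a + t • b) :=
    Filter.eventuallyEq_of_mem (Ioo_mem_nhds (by norm_num) (by norm_num)) fun t ht => (h t ht).2
  refine DifferentiableAt.congr_of_eventuallyEq ?_ hf
  have hc : c + u * 0 ≠ 0 := (h 0 (by norm_num)).1
  fun_prop (disch := exact hc)

lemma isProjectiveFun_inner_sub (hf : IsProjectiveCurve f) (X p : EuclideanSpace ℝ (Fin d)) :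
    IsProjectiveFun fun t => ⟪X, p - f t⟫ := by
  obtain ⟨a, b, c, u, h⟩ := hf
  refine ⟨⟪X, p⟫ * c - ⟪X, a⟫, ⟪X, p⟫ * u - ⟪X, b⟫, c, u, fun t ht => ⟨(h t ht).1, ?_⟩⟩
  dsimp only
  rw [(h t ht).2, inner_sub_right, real_inner_smul_right, inner_add_right, real_inner_smul_right]
  field_simp [(h t ht).1]
  ring

lemma deriv_inner_sub_zero (hf : IsProjectiveCurve f) (X p : EuclideanSpace ℝ (Fin d)) :
    deriv (fun t => ⟪X, p - f t⟫) 0 = -⟪X, deriv f 0⟫ := by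
  refine ((hasDerivAt_const 0 X).inner ℝ
    (hf.differentiableAt_zero.hasDerivAt.const_sub p)).deriv.trans ?_
  simp

end IsProjectiveCurve

lemma exists_affine_curve_mapsTo {d : ℕ} {D : Set (EuclideanSpace ℝ (Fin d))} (hD : IsOpen D)
    {q : EuclideanSpace ℝ (Fin d)} (hq : q ∈ D) (X : EuclideanSpace ℝ (Fin d)) :
    ∃ (f : ℝ → EuclideanSpace ℝ (Fin d)) (V : ℝ), IsProjectiveCurve f ∧
      MapsTo f (Ioo (-1 : ℝ) 1) D ∧ f 0 = q ∧ V • deriv f 0 = X := by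
  obtain ⟨ε, hε, hball⟩ := Metric.isOpen_iff.mp hD q hq
  set δ := ε / (‖X‖ + 1)
  have hδ : 0 < δ := by positivity
  refine ⟨fun t => q + t • δ • X, δ⁻¹, ⟨q, δ • X, 1, 0, fun t _ => by simp⟩, ?_, by simp, ?_⟩
  · intro t ht
    apply hball
    rw [Metric.mem_ball, dist_eq_norm, add_sub_cancel_left, norm_smul, norm_smul,
      Real.norm_eq_abs, Real.norm_of_nonneg hδ.le]
    calc |t| * (δ * ‖X‖) ≤ 1 * (δ * ‖X‖) := by gcongr; exact (abs_lt.mpr ht).le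
      _ < δ * (‖X‖ + 1) := by linarith
      _ = ε := div_mul_cancel₀ ε (by positivity)
  · have hder : HasDerivAt (fun t : ℝ => q + t • δ • X) (δ • X) 0 := by
      simpa using ((hasDerivAt_id (0 : ℝ)).smul_const (δ • X)).const_add q
    rw [hder.deriv, inv_smul_smul₀ hδ.ne']

lemma le_projKoba {d : ℕ} {D : Set (EuclideanSpace ℝ (Fin d))} (hD : IsOpen D)
    {q : EuclideanSpace ℝ (Fin d)} (hq : q ∈ D) (X : EuclideanSpace ℝ (Fin d)) {m : ℝ}
    (h : ∀ (f : ℝ → EuclideanSpace ℝ (Fin d)) (V : ℝ), IsProjectiveCurve f →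
      MapsTo f (Ioo (-1 : ℝ) 1) D → f 0 = q → V • deriv f 0 = X → m ≤ 2 * |V|) :
    m ≤ projKoba D q X := by
  obtain ⟨f, V, hf⟩ := exists_affine_curve_mapsTo hD hq X
  refine le_csInf ⟨_, f, V, hf.1, hf.2.1, hf.2.2.1, hf.2.2.2, rfl⟩ ?_
  rintro _ ⟨f, V, hf, hmaps, hf0, hV, rfl⟩
  exact h f V hf hmaps hf0 hV

theorem stmt6_general (d : ℕ) (D : Set (EuclideanSpace ℝ (Fin d)))
    (hD : IsOpen D) (p q : EuclideanSpace ℝ (Fin d))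
    (hq : q ∈ D) (hpq : p ≠ q)
    (X : EuclideanSpace ℝ (Fin d)) (hX : X = ‖p - q‖⁻¹ • (p - q))
    (hray : ∀ (f : ℝ → EuclideanSpace ℝ (Fin d)) (V : ℝ),
      IsProjectiveCurve f → Set.MapsTo f (Set.Ioo (-1 : ℝ) 1) D →
      f 0 = q → V • deriv f 0 = X →
      ∀ t ∈ Set.Ioo (-1 : ℝ) 1, ∃ s : ℝ, 0 < s ∧ f t = p - s • X) :
    1 / ‖p - q‖ ≤ projKoba D q X := by
  have hr : 0 < ‖p - q‖ := norm_pos_iff.mpr (sub_ne_zero.mpr hpq)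
  have hXX : ⟪X, X⟫ = 1 := by
    rw [real_inner_self_eq_norm_sq, hX, norm_smul, norm_inv, norm_norm, inv_mul_cancel₀ hr.ne']
    norm_num
  refine le_projKoba hD hq X fun f V hf hmaps hf0 hV => ?_
  set g := fun t => ⟪X, p - f t⟫
  have hg0 : g 0 = ‖p - q‖ := by
    show ⟪X, p - f 0⟫ = _
    rw [hf0, hX, real_inner_smul_left, real_inner_self_eq_norm_sq, sq,
      inv_mul_cancel_left₀ hr.ne']
  have hgpos : ∀ t ∈ Ioo (-1 : ℝ) 1, 0 < g t := by
    intro t ht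
    obtain ⟨s, hs, hfs⟩ := hray f V hf hmaps hf0 hV t ht
    show 0 < ⟪X, p - f t⟫
    rwa [hfs, sub_sub_cancel, real_inner_smul_right, hXX, mul_one]
  have hVg : V * deriv g 0 = -1 := by
    rw [hf.deriv_inner_sub_zero, mul_neg, ← real_inner_smul_right, hV, hXX]
  have hbound : |deriv g 0| ≤ 2 * ‖p - q‖ :=
    hg0 ▸ (hf.isProjectiveFun_inner_sub X p).abs_deriv_le hgpos
  rw [div_le_iff₀ hr]
  calc 1 = |V| * |deriv g 0| := by rw [← abs_mul, hVg]; norm_num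
    _ ≤ |V| * (2 * ‖p - q‖) := by gcongr
    _ = 2 * |V| * ‖p - q‖ := by ring

/-- let `q ∈ D`, `p ∈ ∂D`, `X = (p - q)/‖p - q‖`. If every projective map
`f : (-1,1) → D` with `f(0) = q` and derivative along `X` has image contained in the ray
`{p - t·X : t > 0}`, then `F_D(q;X) ≥ 1/‖p - q‖`. -/
theorem stmt6 (d : ℕ) (hd : 1 ≤ d) (D : Set (EuclideanSpace ℝ (Fin d)))
    (hD : IsOpen D) (p q : EuclideanSpace ℝ (Fin d))
    (hp : p ∈ frontier D) (hq : q ∈ D) (hpq : p ≠ q)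
    (X : EuclideanSpace ℝ (Fin d)) (hX : X = ‖p - q‖⁻¹ • (p - q))
    (hray : ∀ (f : ℝ → EuclideanSpace ℝ (Fin d)) (V : ℝ),
      IsProjectiveCurve f → Set.MapsTo f (Set.Ioo (-1 : ℝ) 1) D →
      f 0 = q → V • deriv f 0 = X →
      ∀ t ∈ Set.Ioo (-1 : ℝ) 1, ∃ s : ℝ, 0 < s ∧ f t = p - s • X) :
    1 / ‖p - q‖ ≤ projKoba D q X :=
  stmt6_general d D hD p q hq hpq X hX hray
end

section
/- Let δ > 0 and define φ_δ: (−1,1) × ℝ^{d−1} → ℝ^d by φ_δ(y₁, y') = (δ(y₁−1)/(1+y₁), √δ·y'/(1+y₁)). Then φ_δ maps the open unit ball B(0,1) ⊂ ℝ^d bijectively onto the paraboloid region {(x₁, x') : x₁ < −‖x'‖²}, and sends the origin to (−δ, 0). -/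
set_option maxHeartbeats 800000


/-- `φ_δ(y₁,y') = (δ(y₁-1)/(1+y₁), (√δ/(1+y₁))•y')` maps the open unit
ball of `ℝ × ℝ^{d-1}` bijectively onto `{(x₁,x') : x₁ < -‖x'‖²}` and sends the origin
to `(-δ, 0)`. -/
theorem stmt10 (n : ℕ) (hn : 1 ≤ n) (δ : ℝ) (hδ : 0 < δ) :
    Set.BijOn
      (fun y : ℝ × EuclideanSpace ℝ (Fin n) =>
        ((δ * (y.1 - 1) / (1 + y.1), (Real.sqrt δ / (1 + y.1)) • y.2) :
          ℝ × EuclideanSpace ℝ (Fin n)))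
      {y : ℝ × EuclideanSpace ℝ (Fin n) | y.1 ^ 2 + ‖y.2‖ ^ 2 < 1}
      {x : ℝ × EuclideanSpace ℝ (Fin n) | x.1 < -‖x.2‖ ^ 2} ∧
    ((δ * ((0 : ℝ) - 1) / (1 + (0 : ℝ)), (Real.sqrt δ / (1 + (0 : ℝ))) •
        (0 : EuclideanSpace ℝ (Fin n))) : ℝ × EuclideanSpace ℝ (Fin n)) =
      (-δ, (0 : EuclideanSpace ℝ (Fin n))) := by
  have hδ' : 0 < Real.sqrt δ := Real.sqrt_pos.mpr hδ
  have hsq : Real.sqrt δ * Real.sqrt δ = δ := Real.mul_self_sqrt hδ.le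
  have hsq2 : Real.sqrt δ ^ 2 = δ := Real.sq_sqrt hδ.le
  constructor
  · set g : ℝ × EuclideanSpace ℝ (Fin n) → ℝ × EuclideanSpace ℝ (Fin n) :=
      fun x => ((δ + x.1) / (δ - x.1), (2 * Real.sqrt δ / (δ - x.1)) • x.2) with hg
    have hs : ∀ y : ℝ × EuclideanSpace ℝ (Fin n),
        y.1 ^ 2 + ‖y.2‖ ^ 2 < 1 → 0 < 1 + y.1 := by
      intro y hy
      nlinarith [sq_nonneg ‖y.2‖, sq_nonneg (1 + y.1)]
    have ht : ∀ x : ℝ × EuclideanSpace ℝ (Fin n),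
        x.1 < -‖x.2‖ ^ 2 → 0 < δ - x.1 := by
      intro x hx
      nlinarith [sq_nonneg ‖x.2‖]
    have hmf : Set.MapsTo
        (fun y : ℝ × EuclideanSpace ℝ (Fin n) =>
          ((δ * (y.1 - 1) / (1 + y.1), (Real.sqrt δ / (1 + y.1)) • y.2) :
            ℝ × EuclideanSpace ℝ (Fin n)))
        {y : ℝ × EuclideanSpace ℝ (Fin n) | y.1 ^ 2 + ‖y.2‖ ^ 2 < 1}
        {x : ℝ × EuclideanSpace ℝ (Fin n) | x.1 < -‖x.2‖ ^ 2} := by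
      intro y hy
      simp only [Set.mem_setOf_eq] at hy ⊢
      have h1 : 0 < 1 + y.1 := hs y hy
      rw [norm_smul, Real.norm_eq_abs, abs_of_pos (div_pos hδ' h1)]
      have key : δ * (y.1 - 1) / (1 + y.1) + (Real.sqrt δ / (1 + y.1) * ‖y.2‖) ^ 2 =
          δ * (y.1 ^ 2 + ‖y.2‖ ^ 2 - 1) / (1 + y.1) ^ 2 := by
        rw [mul_pow, div_pow, hsq2]
        field_simp
        ring
      have hneg : δ * (y.1 ^ 2 + ‖y.2‖ ^ 2 - 1) / (1 + y.1) ^ 2 < 0 := by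
        apply div_neg_of_neg_of_pos
        · nlinarith
        · positivity
      nlinarith [key, hneg]
    have hmg : Set.MapsTo g
        {x : ℝ × EuclideanSpace ℝ (Fin n) | x.1 < -‖x.2‖ ^ 2}
        {y : ℝ × EuclideanSpace ℝ (Fin n) | y.1 ^ 2 + ‖y.2‖ ^ 2 < 1} := by
      intro x hx
      simp only [Set.mem_setOf_eq, hg] at hx ⊢
      have h1 : 0 < δ - x.1 := ht x hx
      rw [norm_smul, Real.norm_eq_abs,
        abs_of_pos (div_pos (by positivity) h1)]
      have key : ((δ + x.1) / (δ - x.1)) ^ 2 + (2 * Real.sqrt δ / (δ - x.1) * ‖x.2‖) ^ 2 - 1 =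
          4 * δ * (x.1 + ‖x.2‖ ^ 2) / (δ - x.1) ^ 2 := by
        rw [mul_pow, div_pow, div_pow, mul_pow, hsq2]
        field_simp
        ring
      have hneg : 4 * δ * (x.1 + ‖x.2‖ ^ 2) / (δ - x.1) ^ 2 < 0 := by
        apply div_neg_of_neg_of_pos
        · nlinarith
        · positivity
      nlinarith [key, hneg]
    refine Set.InvOn.bijOn ⟨?_, ?_⟩ hmf hmg
    · -- LeftInvOn g f s
      intro y hy
      simp only [Set.mem_setOf_eq] at hy
      have h1 : 0 < 1 + y.1 := hs y hy
      have h1' : (1 + y.1) ≠ 0 := ne_of_gt h1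
      have hd : δ - δ * (y.1 - 1) / (1 + y.1) = 2 * δ / (1 + y.1) := by
        field_simp; ring
      have e1 : (δ + δ * (y.1 - 1) / (1 + y.1)) / (δ - δ * (y.1 - 1) / (1 + y.1)) = y.1 := by
        rw [hd, div_eq_iff (by positivity)]
        field_simp
        ring
      have e2 : (2 * Real.sqrt δ / (δ - δ * (y.1 - 1) / (1 + y.1))) •
          ((Real.sqrt δ / (1 + y.1)) • y.2) = y.2 := by
        rw [smul_smul, hd]
        have hc : 2 * Real.sqrt δ / (2 * δ / (1 + y.1)) * (Real.sqrt δ / (1 + y.1)) = 1 := by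
          rw [div_mul_div_comm, div_eq_one_iff_eq (by positivity)]
          field_simp
          nlinarith [hsq]
        rw [hc, one_smul]
      simp only [hg]
      exact Prod.ext e1 e2
    · -- RightInvOn g f t
      intro x hx
      simp only [Set.mem_setOf_eq] at hx
      have h1 : 0 < δ - x.1 := ht x hx
      have h1' : (δ - x.1) ≠ 0 := ne_of_gt h1
      have hd : 1 + (δ + x.1) / (δ - x.1) = 2 * δ / (δ - x.1) := by
        field_simp; ring
      have e1 : δ * ((δ + x.1) / (δ - x.1) - 1) / (1 + (δ + x.1) / (δ - x.1)) = x.1 := by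
        rw [hd, div_eq_iff (by positivity)]
        field_simp
        ring
      have e2 : (Real.sqrt δ / (1 + (δ + x.1) / (δ - x.1))) •
          ((2 * Real.sqrt δ / (δ - x.1)) • x.2) = x.2 := by
        rw [smul_smul, hd]
        have hc : Real.sqrt δ / (2 * δ / (δ - x.1)) * (2 * Real.sqrt δ / (δ - x.1)) = 1 := by
          rw [div_mul_div_comm, div_eq_one_iff_eq (by positivity)]
          field_simp
          nlinarith [hsq]
        rw [hc, one_smul]
      simp only [hg]
      exact Prod.ext e1 e2
  · refine Prod.ext ?_ ?_
    · norm_num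
    · simp
end

section
/- Let D ⊂ ℝ^d be an open convex set containing 0 with D ⊂ (−1,∞)^d and B(0, r') ⊂ D for some r' ∈ (0,1). Then the projective squeezing function satisfies s_D(0) ≥ r'/(d·r' + √d·(d+1)). -/
open scoped BigOperators

/-!
With `u = (√d, …, √d)` and `a = √d (d + 1)`, the map `Φ(x) = x / (√d (d + 1 + ∑ xᵢ))` is the
perspective map `x ↦ x / (a + ⟪u, x⟫)`, induced by the matrix with rows `(a, u)` and `(0, I)`. On `(-1, ∞)^d`
every coordinate satisfies `|xᵢ| < d + 1 + ∑ xⱼ`, so `‖x‖ < a + ⟪u, x⟫` and `D` lands in the unit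
ball. Conversely the perspective map is inverted by `y ↦ a y / (1 - ⟪u, y⟫)`, and Cauchy–Schwarz
with `‖u‖ = d` shows that this inverse sends the ball of radius `r' / (d r' + a)` into `B(0, r')`.
-/

open RealInnerProductSpace

section Perspective

variable {E : Type*} [NormedAddCommGroup E] [InnerProductSpace ℝ E]

noncomputable def perspective (a : ℝ) (u x : E) : E := (a + ⟪u, x⟫)⁻¹ • x

@[simp]
lemma perspective_zero (a : ℝ) (u : E) : perspective a u 0 = 0 := by
  simp [perspective]

lemma norm_perspective_lt_one {a : ℝ} {u x : E} (hx : ‖x‖ < a + ⟪u, x⟫) :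
    ‖perspective a u x‖ < 1 := by
  have hpos : 0 < a + ⟪u, x⟫ := (norm_nonneg x).trans_lt hx
  rw [perspective, norm_smul, Real.norm_of_nonneg (inv_nonneg.2 hpos.le), inv_mul_lt_one₀ hpos]
  exact hx

lemma perspective_smul_div {a : ℝ} (ha : a ≠ 0) {u y : E} (hy : ⟪u, y⟫ ≠ 1) :
    perspective a u ((a / (1 - ⟪u, y⟫)) • y) = y := by
  have ht : 1 - ⟪u, y⟫ ≠ 0 := sub_ne_zero.2 hy.symm
  have hden : a + ⟪u, (a / (1 - ⟪u, y⟫)) • y⟫ = a / (1 - ⟪u, y⟫) := by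
    rw [inner_smul_right]
    field_simp
    ring
  rw [perspective, hden, smul_smul, inv_mul_cancel₀ (div_ne_zero ha ht), one_smul]

lemma ball_subset_image_perspective {a r : ℝ} (ha : 0 < a) (hr : 0 < r) (u : E) {S : Set E}
    (hS : Metric.ball 0 r ⊆ S) :
    Metric.ball 0 (r / (‖u‖ * r + a)) ⊆ perspective a u '' S := by
  intro y hy
  rw [mem_ball_zero_iff] at hy
  have hden : 0 < ‖u‖ * r + a := by positivity
  have hinner : ⟪u, y⟫ ≤ ‖u‖ * r / (‖u‖ * r + a) := calc
    ⟪u, y⟫ ≤ ‖u‖ * ‖y‖ := real_inner_le_norm u y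
    _ ≤ ‖u‖ * (r / (‖u‖ * r + a)) := by gcongr
    _ = ‖u‖ * r / (‖u‖ * r + a) := mul_div_assoc' _ _ _
  have ht : a / (‖u‖ * r + a) ≤ 1 - ⟪u, y⟫ := by
    rw [le_div_iff₀ hden] at hinner
    rw [div_le_iff₀ hden]
    linarith
  have ht0 : 0 < 1 - ⟪u, y⟫ := (div_pos ha hden).trans_le ht
  refine ⟨(a / (1 - ⟪u, y⟫)) • y, hS ?_, perspective_smul_div ha.ne' (by linarith)⟩
  rw [mem_ball_zero_iff, norm_smul, Real.norm_of_nonneg (div_pos ha ht0).le]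
  calc a / (1 - ⟪u, y⟫) * ‖y‖ ≤ (‖u‖ * r + a) * ‖y‖ := by
        gcongr
        rwa [div_le_iff₀ ht0, mul_comm, ← div_le_iff₀ hden]
    _ < (‖u‖ * r + a) * (r / (‖u‖ * r + a)) := by gcongr
    _ = r := mul_div_cancel₀ r hden.ne'

end Perspective

section Projective

variable {d : ℕ}

def perspectiveMatrix (a : ℝ) (u : Fin d → ℝ) : Matrix (Fin (d + 1)) (Fin (d + 1)) ℝ :=
  Matrix.of (Fin.cons (Fin.cons a u) fun k => Fin.cons 0 (Pi.single k 1))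

lemma perspectiveMatrix_mulVec_zero (a : ℝ) (u x : Fin d → ℝ) :
    (perspectiveMatrix a u).mulVec (Fin.cons 1 x) 0 = a + u ⬝ᵥ x :=
  (Matrix.cons_dotProduct_cons a u 1 x).trans (by ring)

lemma perspectiveMatrix_mulVec_succ (a : ℝ) (u x : Fin d → ℝ) (k : Fin d) :
    (perspectiveMatrix a u).mulVec (Fin.cons 1 x) k.succ = x k :=
  (Matrix.cons_dotProduct_cons 0 (Pi.single k 1) 1 x).trans (by simp)

lemma det_perspectiveMatrix (a : ℝ) (u : Fin d → ℝ) : (perspectiveMatrix a u).det = a := by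
  have hminor : (perspectiveMatrix a u).submatrix Fin.succ Fin.succ = 1 := by
    ext i j
    simp [perspectiveMatrix, Matrix.one_apply, Pi.single_apply, eq_comm]
  rw [Matrix.det_succ_column_zero, Fin.sum_univ_succ, Fin.succAbove_zero, hminor]
  simp [perspectiveMatrix]

lemma isProjectiveMap_perspective {a : ℝ} (ha : a ≠ 0) (u : EuclideanSpace ℝ (Fin d))
    {S : Set (EuclideanSpace ℝ (Fin d))} (hS : ∀ x ∈ S, a + ⟪u, x⟫ ≠ 0) :
    IsProjectiveMap S (perspective a u) := by
  refine ⟨perspectiveMatrix a u, by rwa [det_perspectiveMatrix, isUnit_iff_ne_zero], ?_⟩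
  intro x hx
  have hinner : ⟪u, x⟫ = u ⬝ᵥ x := by
    simp [EuclideanSpace.inner_eq_star_dotProduct, dotProduct_comm]
  refine ⟨?_, fun i => ?_⟩
  · rw [perspectiveMatrix_mulVec_zero, ← hinner]
    exact hS x hx
  · rw [perspectiveMatrix_mulVec_zero, perspectiveMatrix_mulVec_succ, ← hinner, perspective,
      PiLp.smul_apply, smul_eq_mul, inv_mul_eq_div]

end Projective

lemma abs_lt_sum_add_of_neg_one_lt {d : ℕ} {x : Fin d → ℝ} (hx : ∀ i, -1 < x i) (i : Fin d) :
    |x i| < d + 1 + ∑ j, x j := by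
  have hpos : ∀ j, 0 ≤ x j + 1 := fun j => (neg_lt_iff_pos_add.1 (hx j)).le
  have hshift : ∑ j, (x j + 1) = ∑ j, x j + d := by simp [Finset.sum_add_distrib]
  have hle : x i + 1 ≤ ∑ j, (x j + 1) :=
    Finset.single_le_sum (fun j _ => hpos j) (Finset.mem_univ i)
  have hnonneg : 0 ≤ ∑ j, (x j + 1) := Finset.sum_nonneg fun j _ => hpos j
  rw [abs_lt]
  constructor <;> linarith [hx i]

lemma norm_lt_sqrt_mul_of_neg_one_lt {d : ℕ} (hd : 1 ≤ d) {x : EuclideanSpace ℝ (Fin d)}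
    (hx : ∀ i, -1 < x i) : ‖x‖ < √d * (d + 1 + ∑ i, x i) := by
  set s := (d : ℝ) + 1 + ∑ i, x i
  have hs : 0 ≤ s := (abs_nonneg _).trans (abs_lt_sum_add_of_neg_one_lt hx ⟨0, hd⟩).le
  have hsq : ∑ i, ‖x i‖ ^ 2 < ∑ _i : Fin d, s ^ 2 := by
    refine Finset.sum_lt_sum_of_nonempty ⟨⟨0, hd⟩, Finset.mem_univ _⟩ fun i _ => ?_
    rw [Real.norm_eq_abs, sq_lt_sq, abs_abs, abs_of_nonneg hs]
    exact abs_lt_sum_add_of_neg_one_lt hx i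
  rw [EuclideanSpace.norm_eq, ← Real.sqrt_sq hs, ← Real.sqrt_mul (Nat.cast_nonneg d)]
  refine Real.sqrt_lt_sqrt (by positivity) (hsq.trans_eq ?_)
  simp

lemma le_projSqueezing {d : ℕ} (hd : 1 ≤ d) {D : Set (EuclideanSpace ℝ (Fin d))}
    {z : EuclideanSpace ℝ (Fin d)} {φ : EuclideanSpace ℝ (Fin d) → EuclideanSpace ℝ (Fin d)}
    {r : ℝ} (hr : 0 < r) (hφ : IsProjectiveMap D φ) (hz : φ z = 0)
    (hinto : φ '' D ⊆ Metric.ball 0 1) (honto : Metric.ball 0 r ⊆ φ '' D) :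
    r ≤ projSqueezing D z := by
  refine le_csSup ⟨1, ?_⟩ (Or.inr ⟨hr, φ, hφ, hz, hinto, honto⟩)
  rintro s (rfl | ⟨-, ψ, -, -, hψinto, hψonto⟩)
  · exact zero_le_one
  by_contra! hs
  have hunit : ‖EuclideanSpace.single (⟨0, hd⟩ : Fin d) (1 : ℝ)‖ = 1 := by simp
  have := hψinto (hψonto (mem_ball_zero_iff.2 (hunit.trans_lt hs)))
  rw [mem_ball_zero_iff, hunit] at this
  exact this.false

theorem stmt15_general (d : ℕ) (hd : 1 ≤ d) (D : Set (EuclideanSpace ℝ (Fin d)))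
    (hV : ∀ x ∈ D, ∀ i, -1 < x i)
    (r' : ℝ) (hr' : r' ∈ Set.Ioo (0 : ℝ) 1)
    (hball : Metric.ball (0 : EuclideanSpace ℝ (Fin d)) r' ⊆ D) :
    r' / (d * r' + Real.sqrt d * (d + 1)) ≤ projSqueezing D 0 := by
  obtain ⟨hr, -⟩ := hr'
  set u : EuclideanSpace ℝ (Fin d) := WithLp.toLp 2 fun _ => √d
  set a := √d * (d + 1)
  have ha : 0 < a := by positivity
  have hu : ‖u‖ = d := by
    simp [u, EuclideanSpace.norm_eq]
  have hden : ∀ x : EuclideanSpace ℝ (Fin d), a + ⟪u, x⟫ = √d * (d + 1 + ∑ i, x i) := by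
    intro x
    simp [a, u, PiLp.inner_apply, ← Finset.sum_mul]
    ring
  have hD : ∀ x ∈ D, ‖x‖ < a + ⟪u, x⟫ := fun x hx =>
    (hden x).symm ▸ norm_lt_sqrt_mul_of_neg_one_lt hd (hV x hx)
  have honto := ball_subset_image_perspective ha hr u hball
  rw [hu] at honto
  refine le_projSqueezing hd (by positivity) ?_ (perspective_zero a u) ?_ honto
  · exact isProjectiveMap_perspective ha.ne' u fun x hx => ((norm_nonneg x).trans_lt (hD x hx)).ne'
  · rintro _ ⟨x, hx, rfl⟩
    exact mem_ball_zero_iff.2 (norm_perspective_lt_one (hD x hx))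

/-- if `D ⊆ (-1,∞)^d` is an open convex set with `B(0,r') ⊆ D`,
`0 ∈ D`, `r' ∈ (0,1)`, then `s_D(0) ≥ r'/(d·r' + √d·(d+1))`. -/
theorem stmt15 (d : ℕ) (hd : 1 ≤ d) (D : Set (EuclideanSpace ℝ (Fin d)))
    (hD : IsOpen D) (hconv : Convex ℝ D)
    (h0 : (0 : EuclideanSpace ℝ (Fin d)) ∈ D)
    (hV : ∀ x ∈ D, ∀ i, -1 < x i)
    (r' : ℝ) (hr' : r' ∈ Set.Ioo (0 : ℝ) 1)
    (hball : Metric.ball (0 : EuclideanSpace ℝ (Fin d)) r' ⊆ D) :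
    r' / (d * r' + Real.sqrt d * (d + 1)) ≤ projSqueezing D 0 :=
  stmt15_general d hd D hV r' hr' hball
end
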